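/- With the same notation, |(∂_v − t∂_x)² Γ_a(t,x,y;s)| ≤ (c/(t−s)) Γ_{a+ε}(t,x,y;s) for all 0 ≤ s < t ≤ T and x, y ∈ ℝ, using the identity (∂_v − t∂_x)² Γ_a = (4/(a(t−s)))·((3x + y(t+2s))²/(a(t−s)³) − 1)·Γ_a. -/

import Mathlib

/-!
Write `Γ_a = C_a exp (-z_a)` with `z_a = 2 Q / (a (t - s)³)` (`kolExponent`), `Q` (`kolQuad`) the
quadratic form in the exponent. `V̄_t` is a derivation with `V̄_t Q = -(t - s) u` and
`V̄_t u = -2 (t - s)` for the linear form `u = 3x + y (t + 2s)` (`kolLin`), which gives the identity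
for `V̄_t² Γ_a`. As `4 Q - u² = 3 (x + t y)²`, this yields
`|V̄_t² Γ_a| ≤ 4 / (a (t - s)) · (2 z_a + 1) Γ_a`. Finally
`Γ_a = (a + ε) / a · exp (-ε z_a / (a + ε)) Γ_{a+ε}`, and the factor `exp (-ε z_a / (a + ε))`
absorbs the polynomial weight `2 z_a + 1` because `w exp (-w) ≤ 1`.
-/

/-- The fundamental solution of the transformed Langevin operator
`L_a = (a/2)(∂_v − t∂_x)² − ∂_t`. -/
noncomputable def GammaKol (a s t x y : ℝ) : ℝ :=
  Real.sqrt 3 / (a * Real.pi * (t - s) ^ 2) *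
    Real.exp (-(2 / (a * (t - s) ^ 3)) *
      (3 * x ^ 2 + 3 * x * y * (t + s) + y ^ 2 * (t ^ 2 + t * s + s ^ 2)))

/-- The vector field `V̄_t = ∂_v − t∂_x` acting on functions of `(x,y)`. -/
noncomputable def Vbar (t : ℝ) (f : ℝ → ℝ → ℝ) : ℝ → ℝ → ℝ :=
  fun x y => deriv (fun y' => f x y') y - t * deriv (fun x' => f x' y) x

open Real

lemma mul_add_one_mul_exp_neg_mul_le {k m z : ℝ} (hk : 0 < k) (hm : 0 ≤ m) (hz : 0 ≤ z) :
    (m * z + 1) * exp (-(k * z)) ≤ m / k + 1 := by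
  have hkz : k * z * exp (-(k * z)) ≤ 1 :=
    (mul_exp_neg_le_exp_neg_one _).trans (exp_le_one_iff.mpr (by norm_num))
  have he : exp (-(k * z)) ≤ 1 := exp_le_one_iff.mpr (by nlinarith)
  calc (m * z + 1) * exp (-(k * z)) = m / k * (k * z * exp (-(k * z))) + exp (-(k * z)) := by
        field_simp
    _ ≤ m / k * 1 + 1 := by gcongr
    _ = m / k + 1 := by ring

section Vbar

variable {f g : ℝ → ℝ → ℝ} {t x y : ℝ}

lemma Vbar_eq_of_hasDerivAt {fx fy : ℝ} (hx : HasDerivAt (fun x' => f x' y) fx x)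
    (hy : HasDerivAt (fun y' => f x y') fy y) : Vbar t f x y = fy - t * fx := by
  rw [Vbar, hx.deriv, hy.deriv]

lemma Vbar_const_mul (c : ℝ) :
    Vbar t (fun x y => c * f x y) x y = c * Vbar t f x y := by
  simp only [Vbar, deriv_const_mul_field']
  ring

lemma Vbar_mul (hfx : DifferentiableAt ℝ (fun x' => f x' y) x)
    (hfy : DifferentiableAt ℝ (fun y' => f x y') y)
    (hgx : DifferentiableAt ℝ (fun x' => g x' y) x)
    (hgy : DifferentiableAt ℝ (fun y' => g x y') y) :
    Vbar t (fun x y => f x y * g x y) x y = Vbar t f x y * g x y + f x y * Vbar t g x y := by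
  simp only [Vbar, deriv_fun_mul hfx hgx, deriv_fun_mul hfy hgy]
  ring

lemma Vbar_exp (hfx : DifferentiableAt ℝ (fun x' => f x' y) x)
    (hfy : DifferentiableAt ℝ (fun y' => f x y') y) :
    Vbar t (fun x y => exp (f x y)) x y = exp (f x y) * Vbar t f x y := by
  simp only [Vbar, deriv_exp hfx, deriv_exp hfy]
  ring

end Vbar

def kolQuad (s t x y : ℝ) : ℝ :=
  3 * x ^ 2 + 3 * x * y * (t + s) + y ^ 2 * (t ^ 2 + t * s + s ^ 2)

def kolLin (s t x y : ℝ) : ℝ := 3 * x + y * (t + 2 * s)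

noncomputable def kolExponent (a s t x y : ℝ) : ℝ := 2 / (a * (t - s) ^ 3) * kolQuad s t x y

section GammaKolDerivatives

variable (a s t x y : ℝ)

lemma kolLin_sq_le : kolLin s t x y ^ 2 ≤ 4 * kolQuad s t x y := by
  have h : 4 * kolQuad s t x y - kolLin s t x y ^ 2 = 3 * (x + y * t) ^ 2 := by
    simp only [kolQuad, kolLin]; ring
  linarith [sq_nonneg (x + y * t)]

lemma kolQuad_nonneg : 0 ≤ kolQuad s t x y := by
  linarith [kolLin_sq_le s t x y, sq_nonneg (kolLin s t x y)]

lemma kolExponent_nonneg {a s t : ℝ} (ha : 0 < a) (hst : s < t) (x y : ℝ) :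
    0 ≤ kolExponent a s t x y := by
  have hτ : 0 < t - s := sub_pos.mpr hst
  have hQ := kolQuad_nonneg s t x y
  unfold kolExponent
  positivity

lemma hasDerivAt_kolQuad_fst :
    HasDerivAt (fun x' => kolQuad s t x' y) (6 * x + 3 * y * (t + s)) x := by
  unfold kolQuad
  refine ((((hasDerivAt_pow 2 x).const_mul 3).fun_add
    (((hasDerivAt_id' x).const_mul 3).mul_const y |>.mul_const (t + s))).add_const
      (y ^ 2 * (t ^ 2 + t * s + s ^ 2))).congr_deriv ?_
  norm_num
  ring

lemma hasDerivAt_kolQuad_snd :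
    HasDerivAt (fun y' => kolQuad s t x y')
      (3 * x * (t + s) + 2 * y * (t ^ 2 + t * s + s ^ 2)) y := by
  unfold kolQuad
  refine (((((hasDerivAt_id' y).const_mul (3 * x)).mul_const (t + s)).const_add
    (3 * x ^ 2)).fun_add ((hasDerivAt_pow 2 y).mul_const (t ^ 2 + t * s + s ^ 2))).congr_deriv ?_
  norm_num

lemma hasDerivAt_kolLin_fst : HasDerivAt (fun x' => kolLin s t x' y) 3 x := by
  unfold kolLin
  simpa using ((hasDerivAt_id' x).const_mul 3).add_const (y * (t + 2 * s))

lemma hasDerivAt_kolLin_snd : HasDerivAt (fun y' => kolLin s t x y') (t + 2 * s) y := by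
  unfold kolLin
  simpa using ((hasDerivAt_id' y).mul_const (t + 2 * s)).const_add (3 * x)

lemma Vbar_kolQuad : Vbar t (kolQuad s t) x y = -(t - s) * kolLin s t x y := by
  rw [Vbar_eq_of_hasDerivAt (hasDerivAt_kolQuad_fst s t x y) (hasDerivAt_kolQuad_snd s t x y),
    kolLin]
  ring

lemma Vbar_kolLin : Vbar t (kolLin s t) x y = -2 * (t - s) := by
  rw [Vbar_eq_of_hasDerivAt (hasDerivAt_kolLin_fst s t x y) (hasDerivAt_kolLin_snd s t x y)]
  ring

lemma Vbar_neg_kolExponent :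
    Vbar t (fun x y => -kolExponent a s t x y) x y
      = 2 / (a * (t - s) ^ 3) * (t - s) * kolLin s t x y := by
  simp only [kolExponent, ← neg_mul]
  rw [Vbar_const_mul, Vbar_kolQuad]
  ring

lemma GammaKol_eq_mul_exp :
    GammaKol a s t x y = √3 / (a * π * (t - s) ^ 2) * exp (-kolExponent a s t x y) := by
  rw [GammaKol, kolExponent, kolQuad, neg_mul]

lemma GammaKol_nonneg {a : ℝ} (ha : 0 ≤ a) (s t x y : ℝ) : 0 ≤ GammaKol a s t x y := by
  unfold GammaKol
  positivity

lemma differentiableAt_GammaKol_fst : DifferentiableAt ℝ (fun x' => GammaKol a s t x' y) x := by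
  unfold GammaKol
  fun_prop

lemma differentiableAt_GammaKol_snd : DifferentiableAt ℝ (fun y' => GammaKol a s t x y') y := by
  unfold GammaKol
  fun_prop

variable {a s t}

lemma Vbar_GammaKol :
    Vbar t (fun x y => GammaKol a s t x y) x y
      = 2 / (a * (t - s) ^ 2) * kolLin s t x y * GammaKol a s t x y := by
  have hx : DifferentiableAt ℝ (fun x' => -kolExponent a s t x' y) x := by
    unfold kolExponent kolQuad; fun_prop
  have hy : DifferentiableAt ℝ (fun y' => -kolExponent a s t x y') y := by
    unfold kolExponent kolQuad; fun_prop
  simp only [GammaKol_eq_mul_exp]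
  rw [Vbar_const_mul, Vbar_exp hx hy, Vbar_neg_kolExponent]
  field_simp

lemma Vbar_Vbar_GammaKol (ha : a ≠ 0) (hst : s ≠ t) :
    Vbar t (Vbar t (fun x y => GammaKol a s t x y)) x y
      = 4 / (a * (t - s)) * (kolLin s t x y ^ 2 / (a * (t - s) ^ 3) - 1) * GammaKol a s t x y := by
  have hV : Vbar t (fun x y => GammaKol a s t x y)
      = fun x y => 2 / (a * (t - s) ^ 2) * kolLin s t x y * GammaKol a s t x y := by
    funext x y
    exact Vbar_GammaKol x y
  rw [hV, Vbar_mul ((hasDerivAt_kolLin_fst s t x y).differentiableAt.const_mul _)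
    ((hasDerivAt_kolLin_snd s t x y).differentiableAt.const_mul _)
    (differentiableAt_GammaKol_fst a s t x y) (differentiableAt_GammaKol_snd a s t x y),
    Vbar_const_mul, Vbar_kolLin, Vbar_GammaKol x y]
  field_simp
  ring

lemma abs_Vbar_Vbar_GammaKol_le (ha : 0 < a) (hst : s < t) :
    |Vbar t (Vbar t (fun x y => GammaKol a s t x y)) x y|
      ≤ 4 / (a * (t - s)) * (2 * kolExponent a s t x y + 1) * GammaKol a s t x y := by
  have hτ : 0 < t - s := sub_pos.mpr hst
  have hw : kolLin s t x y ^ 2 / (a * (t - s) ^ 3) ≤ 2 * kolExponent a s t x y := by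
    rw [kolExponent, div_le_iff₀ (by positivity)]
    have := kolLin_sq_le s t x y
    field_simp
    linarith
  have hw₀ : 0 ≤ kolLin s t x y ^ 2 / (a * (t - s) ^ 3) := by positivity
  have hΓ := GammaKol_nonneg ha.le s t x y
  rw [Vbar_Vbar_GammaKol x y ha.ne' hst.ne, abs_mul, abs_mul,
    abs_of_pos (by positivity : 0 < 4 / (a * (t - s))), abs_of_nonneg hΓ]
  gcongr
  exact abs_le.mpr ⟨by linarith, by linarith⟩

end GammaKolDerivatives

section GaussianAbsorption

variable {a ε s t : ℝ} (x y : ℝ)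

lemma GammaKol_eq_mul_exp_mul_GammaKol_add (ha : 0 < a) (hε : 0 < ε) :
    GammaKol a s t x y
      = (a + ε) / a * exp (-(ε / (a + ε) * kolExponent a s t x y)) * GammaKol (a + ε) s t x y := by
  have hz : kolExponent (a + ε) s t x y = a / (a + ε) * kolExponent a s t x y := by
    simp only [kolExponent]
    field_simp
  have hsplit : -kolExponent a s t x y
      = -(ε / (a + ε) * kolExponent a s t x y) + -kolExponent (a + ε) s t x y := by
    rw [hz]
    field_simp
    ring
  rw [GammaKol_eq_mul_exp, GammaKol_eq_mul_exp (a + ε), hsplit, exp_add]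
  field_simp

lemma two_mul_kolExponent_add_one_mul_GammaKol_le (ha : 0 < a) (hε : 0 < ε) (hst : s < t) :
    (2 * kolExponent a s t x y + 1) * GammaKol a s t x y
      ≤ (a + ε) / a * (2 * (a + ε) / ε + 1) * GammaKol (a + ε) s t x y := by
  have hk : 0 < ε / (a + ε) := by positivity
  have hΓ := GammaKol_nonneg (by positivity : 0 ≤ a + ε) s t x y
  have hexp := mul_add_one_mul_exp_neg_mul_le hk zero_le_two (kolExponent_nonneg ha hst x y)
  rw [div_div_eq_mul_div] at hexp
  calc (2 * kolExponent a s t x y + 1) * GammaKol a s t x y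
      = (a + ε) / a * ((2 * kolExponent a s t x y + 1)
          * exp (-(ε / (a + ε) * kolExponent a s t x y))) * GammaKol (a + ε) s t x y := by
        rw [GammaKol_eq_mul_exp_mul_GammaKol_add x y ha hε]
        ring
    _ ≤ (a + ε) / a * (2 * (a + ε) / ε + 1) * GammaKol (a + ε) s t x y := by gcongr

end GaussianAbsorption

theorem second_order_estimate_GammaKol_general (a ε T : ℝ) (ha : 0 < a) (hε : 0 < ε) :
    ∃ c : ℝ, 0 < c ∧
      ∀ s t x y : ℝ, 0 ≤ s → s < t → t ≤ T →
        |Vbar t (Vbar t (fun x' y' => GammaKol a s t x' y')) x y|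
        ≤ c / (t - s) * GammaKol (a + ε) s t x y := by
  refine ⟨4 * (a + ε) / a ^ 2 * (2 * (a + ε) / ε + 1), by positivity,
    fun s t x y _ hst _ => ?_⟩
  calc _ ≤ 4 / (a * (t - s)) * ((2 * kolExponent a s t x y + 1) * GammaKol a s t x y) := by
        simpa only [mul_assoc] using abs_Vbar_Vbar_GammaKol_le x y ha hst
    _ ≤ 4 / (a * (t - s)) * ((a + ε) / a * (2 * (a + ε) / ε + 1) * GammaKol (a + ε) s t x y) := by
        gcongr _ * ?_
        exact two_mul_kolExponent_add_one_mul_GammaKol_le x y ha hε hst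
    _ = _ := by
        field_simp

/-- Second-order Gaussian estimate: for every `ε > 0` there is `c > 0` with
`|(∂_v − t∂_x)² Γ_a| ≤ (c/(t−s)) Γ_{a+ε}` for `0 ≤ s < t ≤ T`. -/
theorem second_order_estimate_GammaKol (a ε T : ℝ) (ha : 0 < a) (hε : 0 < ε) (hT : 0 < T) :
    ∃ c : ℝ, 0 < c ∧
      ∀ s t x y : ℝ, 0 ≤ s → s < t → t ≤ T →
        |Vbar t (Vbar t (fun x' y' => GammaKol a s t x' y')) x y|
        ≤ c / (t - s) * GammaKol (a + ε) s t x y :=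
  second_order_estimate_GammaKol_general a ε T ha hε
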